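/- (Relating ergodic components of f and f^k) Let μ be an f-non-singular finite Borel measure on a compact separable metric space X, where f : X → X is measurable, and let k ≥ 1. If U is a μ-ergodic component with respect to f, then U can be partitioned (mod μ) into at most k μ-ergodic components with respect to f^k. Furthermore, if U_1, U_2 ⊂ U are μ-ergodic components with respect to f^k, then U_2 = f^{-j}(U_1) (mod μ) for some 0 ≤ j < k. -/

import Mathlib

open Set Metric Topology Filter MeasureTheory

/-- A `μ`-ergodic component for `g`: a `g`-invariant set of positive measure all
of whose `g`-invariant subsets have zero or full relative measure.  (`μ` is not
assumed invariant.) -/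
def ErgodicComponent {X : Type*} [MeasurableSpace X] (g : X → X) (μ : Measure X)
    (U : Set X) : Prop :=
  g ⁻¹' U = U ∧ 0 < μ U ∧
    ∀ V : Set X, V ⊆ U → g ⁻¹' V = V → μ V = 0 ∨ μ (U \ V) = 0

/-- `μ` is `f`-non-singular: preimages of null Borel sets are null
(equivalently, `f_*μ ≪ μ`). -/
def NonSingular {X : Type*} [MeasurableSpace X] (f : X → X) (μ : Measure X) : Prop :=
  ∀ Y : Set X, MeasurableSet Y → μ Y = 0 → μ (f ⁻¹' Y) = 0

/-!
If `B ⊆ U` is `f^[k]`-invariant and not null, then `⋃ n, f^[n] ⁻¹' B` is `f`-invariant, so by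
ergodicity it fills `U` up to a null set, and every non-null `f^[k]`-invariant `C ⊆ U` meets some
`f^[j] ⁻¹' B` with `j < k` in positive measure. Refining step by step, finitely many such sets
`B i` have a common non-null invariant subset `c ⊆ f^[j i] ⁻¹' B i`; if the `B i` are disjoint the
exponents `j i < k` are distinct, so there are at most `k` of them. A disjoint family of maximal
size therefore consists of ergodic components of `f^[k]` (a splitting would enlarge it) and
exhausts `U` (so would the remainder). For the second part, `U₂` meets some `f^[j] ⁻¹' U₁` in
positive measure; by non-singularity this preimage is again an ergodic component, and two
ergodic components with non-null intersection agree up to a null set.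
-/

section Iterate

variable {X : Type*} {f g : X → X} {B : Set X} {k : ℕ}

theorem preimage_iterate_eq_self (h : f ⁻¹' B = B) (n : ℕ) : f^[n] ⁻¹' B = B := by
  rw [Set.preimage_iterate_eq]
  exact Function.iterate_fixed h n

theorem preimage_iterate_mod (h : f^[k] ⁻¹' B = B) (n : ℕ) : f^[n] ⁻¹' B = f^[n % k] ⁻¹' B := by
  conv_lhs => rw [← Nat.div_add_mod n k, Function.iterate_add, preimage_comp,
    Function.iterate_mul, preimage_iterate_eq_self h]

theorem Function.Commute.preimage_preimage_comm {h : X → X} (hgh : Function.Commute g h)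
    (B : Set X) : g ⁻¹' (h ⁻¹' B) = h ⁻¹' (g ⁻¹' B) := by
  rw [← preimage_comp, ← preimage_comp, hgh.comp_eq]

end Iterate

section Measure

variable {X : Type*} [MeasurableSpace X] {μ : Measure X} {f g : X → X} {U A B C : Set X} {k : ℕ}

theorem NonSingular.measure_preimage_null (hns : NonSingular f μ) {Y : Set X} (hY : μ Y = 0) :
    μ (f ⁻¹' Y) = 0 :=
  measure_mono_null (preimage_mono (subset_toMeasurable μ Y))
    (hns _ (measurableSet_toMeasurable μ Y) (by rwa [measure_toMeasurable]))

namespace ErgodicComponent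

theorem measure_diff_eq_zero_of_invariant (hA : ErgodicComponent g μ A) (hB : g ⁻¹' B = B)
    (h : 0 < μ (A ∩ B)) : μ (A \ B) = 0 := by
  have hAB : g ⁻¹' (A ∩ B) = A ∩ B := by rw [preimage_inter, hA.1, hB]
  rcases hA.2.2 _ inter_subset_left hAB with h0 | h0
  · exact absurd h0 h.ne'
  · rwa [sdiff_self_inter] at h0

theorem measure_symmDiff_eq_zero (hA : ErgodicComponent g μ A) (hB : ErgodicComponent g μ B)
    (h : 0 < μ (A ∩ B)) : μ (symmDiff A B) = 0 :=
  measure_union_null (hA.measure_diff_eq_zero_of_invariant hB.1 h)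
    (hB.measure_diff_eq_zero_of_invariant hA.1 (by rwa [inter_comm]))

theorem preimage (hA : ErgodicComponent (f^[k]) μ A) (hns : NonSingular f μ) (hk : 0 < k)
    (hpos : 0 < μ (f ⁻¹' A)) : ErgodicComponent (f^[k]) μ (f ⁻¹' A) := by
  obtain ⟨m, rfl⟩ := Nat.exists_eq_add_one_of_ne_zero hk.ne'
  have hf : ∀ Y : Set X, f^[m + 1] ⁻¹' Y = f ⁻¹' (f^[m] ⁻¹' Y) := fun Y => by
    rw [Function.iterate_succ, preimage_comp]
  refine ⟨by rw [(Function.Commute.self_iterate f _).symm.preimage_preimage_comm, hA.1], hpos,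
    fun V hV hVk => ?_⟩
  set V' := f^[m] ⁻¹' V ∩ A
  have hV' : f ⁻¹' V' = V := by
    rw [preimage_inter, ← hf, hVk, inter_eq_left.2 hV]
  have hV'k : f^[m + 1] ⁻¹' V' = V' := by
    rw [preimage_inter, (Function.Commute.iterate_iterate_self f _ _).preimage_preimage_comm, hVk,
      hA.1]
  rcases hA.2.2 V' inter_subset_right hV'k with h0 | h0
  · exact Or.inl (hV' ▸ hns.measure_preimage_null h0)
  · refine Or.inr ?_
    rw [← hV', ← preimage_sdiff]
    exact hns.measure_preimage_null h0

theorem preimage_iterate (hA : ErgodicComponent (f^[k]) μ A) (hns : NonSingular f μ)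
    (hk : 0 < k) (n : ℕ) (hpos : 0 < μ (f^[n] ⁻¹' A)) :
    ErgodicComponent (f^[k]) μ (f^[n] ⁻¹' A) := by
  induction n with
  | zero => simpa using hA
  | succ n ih =>
    rw [Function.iterate_succ, preimage_comp] at hpos ⊢
    have hn : 0 < μ (f^[n] ⁻¹' A) :=
      pos_iff_ne_zero.2 fun h0 => hpos.ne' (hns.measure_preimage_null h0)
    exact (ih hn).preimage hns hk hpos

theorem measure_diff_iUnion_preimage_iterate_eq_zero (hU : ErgodicComponent f μ U) (hk : 0 < k)
    (hBU : B ⊆ U) (hBk : f^[k] ⁻¹' B = B) (hB : 0 < μ B) :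
    μ (U \ ⋃ n, f^[n] ⁻¹' B) = 0 := by
  set S := ⋃ n, f^[n] ⁻¹' B
  have hBS : B ⊆ S := fun x hx => mem_iUnion.2 ⟨0, hx⟩
  have hSU : S ⊆ U := iUnion_subset fun n => (preimage_mono hBU).trans_eq
    (preimage_iterate_eq_self hU.1 n)
  -- `f⁻¹' S` omits only the `n = 0` term, which reappears as the `n = k` term.
  have hS : f ⁻¹' S = S := by
    refine Subset.antisymm (fun x hx => ?_) (iUnion_subset fun n => ?_)
    · obtain ⟨n, hn⟩ := mem_iUnion.1 hx
      exact mem_iUnion.2 ⟨n + 1, by rwa [Function.iterate_succ, preimage_comp]⟩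
    · cases n with
      | zero =>
        obtain ⟨m, rfl⟩ := Nat.exists_eq_add_one_of_ne_zero hk.ne'
        rw [Function.iterate_zero, preimage_id, ← hBk, Function.iterate_succ, preimage_comp]
        exact preimage_mono (subset_iUnion (fun n => f^[n] ⁻¹' B) m)
      | succ n =>
        rw [Function.iterate_succ, preimage_comp]
        exact preimage_mono (subset_iUnion (fun n => f^[n] ⁻¹' B) n)
  rcases hU.2.2 S hSU hS with h0 | h0
  · exact absurd (measure_mono_null hBS h0) hB.ne'
  · exact h0

theorem exists_lt_pos_inter_preimage (hU : ErgodicComponent f μ U) (hk : 0 < k)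
    (hBU : B ⊆ U) (hBk : f^[k] ⁻¹' B = B) (hB : 0 < μ B) (hCU : C ⊆ U) (hC : 0 < μ C) :
    ∃ j < k, 0 < μ (C ∩ f^[j] ⁻¹' B) := by
  by_contra! h
  have hnull : ∀ n, μ (C ∩ f^[n] ⁻¹' B) = 0 := fun n => by
    rw [preimage_iterate_mod hBk n]
    exact nonpos_iff_eq_zero.1 (h _ (Nat.mod_lt n hk))
  have hsub : C ⊆ (U \ ⋃ n, f^[n] ⁻¹' B) ∪ ⋃ n, C ∩ f^[n] ⁻¹' B := by
    intro x hx
    by_cases hxB : x ∈ ⋃ n, f^[n] ⁻¹' B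
    · obtain ⟨n, hn⟩ := mem_iUnion.1 hxB
      exact Or.inr (mem_iUnion.2 ⟨n, hx, hn⟩)
    · exact Or.inl ⟨hCU hx, hxB⟩
  exact hC.ne' (measure_mono_null hsub (measure_union_null
    (hU.measure_diff_iUnion_preimage_iterate_eq_zero hk hBU hBk hB) (measure_iUnion_null hnull)))

theorem exists_common_subset_preimage_iterate {ι : Type*} (hU : ErgodicComponent f μ U)
    (hk : 0 < k) (s : Finset ι) (b : ι → Set X) (hbU : ∀ i ∈ s, b i ⊆ U)
    (hbk : ∀ i ∈ s, f^[k] ⁻¹' b i = b i) (hb : ∀ i ∈ s, 0 < μ (b i)) :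
    ∃ (c : Set X) (j : ι → ℕ), c ⊆ U ∧ f^[k] ⁻¹' c = c ∧ 0 < μ c ∧
      ∀ i ∈ s, j i < k ∧ c ⊆ f^[j i] ⁻¹' b i := by
  classical
  induction s using Finset.induction_on with
  | empty => exact ⟨U, fun _ => 0, subset_rfl, preimage_iterate_eq_self hU.1 k, hU.2.1, by simp⟩
  | insert a s has ih =>
    rw [Finset.forall_mem_insert] at hbU hbk hb
    obtain ⟨c, j, hcU, hck, hc, hcj⟩ := ih hbU.2 hbk.2 hb.2
    obtain ⟨t, htk, ht⟩ := hU.exists_lt_pos_inter_preimage hk hbU.1 hbk.1 hb.1 hcU hc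
    refine ⟨c ∩ f^[t] ⁻¹' b a, Function.update j a t, inter_subset_left.trans hcU, ?_, ht, ?_⟩
    · rw [preimage_inter, hck, (Function.Commute.iterate_iterate_self f _ _).preimage_preimage_comm,
        hbk.1]
    · intro i hi
      rcases Finset.mem_insert.1 hi with rfl | hi
      · rw [Function.update_self]
        exact ⟨htk, inter_subset_right⟩
      · rw [Function.update_of_ne (ne_of_mem_of_not_mem hi has)]
        exact ⟨(hcj i hi).1, inter_subset_left.trans (hcj i hi).2⟩

end ErgodicComponent

structure IsDisjointInvariantFamily (g : X → X) (μ : Measure X) (U : Set X) {n : ℕ}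
    (W : Fin n → Set X) : Prop where
  pairwise_disjoint : Pairwise fun i j => Disjoint (W i) (W j)
  subset : ∀ i, W i ⊆ U
  invariant : ∀ i, g ⁻¹' W i = W i
  pos : ∀ i, 0 < μ (W i)

namespace IsDisjointInvariantFamily

variable {n : ℕ} {W : Fin n → Set X}

theorem card_le (hW : IsDisjointInvariantFamily (f^[k]) μ U W) (hU : ErgodicComponent f μ U)
    (hk : 0 < k) : n ≤ k := by
  obtain ⟨c, j, -, -, hc, hcj⟩ := hU.exists_common_subset_preimage_iterate hk Finset.univ W
    (fun i _ => hW.subset i) (fun i _ => hW.invariant i) (fun i _ => hW.pos i)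
  refine Fin.le_of_injective (fun i => ⟨j i, (hcj i (Finset.mem_univ i)).1⟩) fun i i' hii' => ?_
  by_contra hne
  have hj : j i = j i' := congrArg Fin.val hii'
  have hc' : c ⊆ f^[j i] ⁻¹' (W i ∩ W i') := by
    rw [preimage_inter]
    exact subset_inter (hcj i (Finset.mem_univ i)).2 (hj ▸ (hcj i' (Finset.mem_univ i')).2)
  rw [(hW.pairwise_disjoint hne).inter_eq, preimage_empty] at hc'
  exact hc.ne' (measure_mono_null hc' measure_empty)

theorem mono (hW : IsDisjointInvariantFamily g μ U W) {W' : Fin n → Set X}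
    (hW'W : ∀ i, W' i ⊆ W i) (hW' : ∀ i, g ⁻¹' W' i = W' i) (hμW' : ∀ i, 0 < μ (W' i)) :
    IsDisjointInvariantFamily g μ U W' :=
  ⟨hW.pairwise_disjoint.mono fun i j h => h.mono (hW'W i) (hW'W j),
    fun i => (hW'W i).trans (hW.subset i), hW', hμW'⟩

theorem cons (hW : IsDisjointInvariantFamily g μ U W) (hAU : A ⊆ U) (hA : g ⁻¹' A = A)
    (hμA : 0 < μ A) (hAW : ∀ i, Disjoint A (W i)) :
    IsDisjointInvariantFamily g μ U (Fin.cons A W : Fin (n + 1) → Set X) := by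
  refine ⟨fun i j hij => ?_, Fin.cases hAU hW.subset, Fin.cases hA hW.invariant,
    Fin.cases hμA hW.pos⟩
  induction i using Fin.cases <;> induction j using Fin.cases
  · exact absurd rfl hij
  · simpa using hAW _
  · simpa using (hAW _).symm
  · simpa using hW.pairwise_disjoint fun h => hij (congrArg Fin.succ h)

theorem split (hW : IsDisjointInvariantFamily g μ U W) (i : Fin n) {V : Set X} (hV : V ⊆ W i)
    (hgV : g ⁻¹' V = V) (hμV : 0 < μ V) (hμV' : 0 < μ (W i \ V)) :
    IsDisjointInvariantFamily g μ U
      (Fin.cons V (Function.update W i (W i \ V)) : Fin (n + 1) → Set X) := by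
  have hupdate : IsDisjointInvariantFamily g μ U (Function.update W i (W i \ V)) := by
    refine hW.mono (fun l => ?_) (fun l => ?_) (fun l => ?_) <;>
      rcases eq_or_ne l i with rfl | hl
    · rw [Function.update_self]
      exact sdiff_subset
    · rw [Function.update_of_ne hl]
    · rw [Function.update_self, preimage_sdiff, hW.invariant, hgV]
    · rw [Function.update_of_ne hl, hW.invariant]
    · rwa [Function.update_self]
    · rw [Function.update_of_ne hl]
      exact hW.pos l
  refine hupdate.cons (hV.trans (hW.subset i)) hgV hμV fun l => ?_
  rcases eq_or_ne l i with rfl | hl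
  · rw [Function.update_self]
    exact disjoint_sdiff_right
  · rw [Function.update_of_ne hl]
    exact (hW.pairwise_disjoint hl.symm).mono_left hV

theorem ergodicComponent (hW : IsDisjointInvariantFamily g μ U W)
    (hmax : ∀ W' : Fin (n + 1) → Set X, ¬ IsDisjointInvariantFamily g μ U W') (i : Fin n) :
    ErgodicComponent g μ (W i) := by
  refine ⟨hW.invariant i, hW.pos i, fun V hV hgV => ?_⟩
  by_contra! h
  exact hmax _ (hW.split i hV hgV (pos_iff_ne_zero.2 h.1) (pos_iff_ne_zero.2 h.2))

theorem measure_diff_iUnion_eq_zero (hW : IsDisjointInvariantFamily g μ U W)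
    (hU : g ⁻¹' U = U) (hmax : ∀ W' : Fin (n + 1) → Set X, ¬ IsDisjointInvariantFamily g μ U W') :
    μ (U \ ⋃ i, W i) = 0 := by
  by_contra h
  refine hmax _ (hW.cons sdiff_subset ?_ (pos_iff_ne_zero.2 h)
    fun i => disjoint_sdiff_left.mono_right (subset_iUnion W i))
  simp only [preimage_sdiff, preimage_iUnion, hU, hW.invariant]

end IsDisjointInvariantFamily

theorem ErgodicComponent.exists_maximal_isDisjointInvariantFamily (hU : ErgodicComponent f μ U)
    (hk : 0 < k) :
    ∃ (n : ℕ) (W : Fin n → Set X), IsDisjointInvariantFamily (f^[k]) μ U W ∧ 1 ≤ n ∧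
      ∀ W' : Fin (n + 1) → Set X, ¬ IsDisjointInvariantFamily (f^[k]) μ U W' := by
  classical
  let P (n : ℕ) : Prop := ∃ W : Fin n → Set X, IsDisjointInvariantFamily (f^[k]) μ U W
  have hP1 : P 1 := ⟨fun _ => U, Subsingleton.pairwise, fun _ => subset_rfl,
    fun _ => preimage_iterate_eq_self hU.1 k, fun _ => hU.2.1⟩
  obtain ⟨W, hW⟩ := Nat.findGreatest_spec hk hP1
  exact ⟨_, W, hW, Nat.le_findGreatest hk hP1, fun W' hW' =>
    Nat.findGreatest_is_greatest (Nat.lt_succ_self _) (hW'.card_le hU hk) ⟨W', hW'⟩⟩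

end Measure

theorem ergodic_components_of_iterate_general
    {X : Type*}
    [MeasurableSpace X]
    (f : X → X) (μ : Measure X)
    (hns : NonSingular f μ)
    (k : ℕ) (hk : 1 ≤ k)
    (U : Set X) (hU : ErgodicComponent f μ U) :
    (∃ (m : ℕ) (W : Fin m → Set X), 1 ≤ m ∧ m ≤ k ∧
      (∀ i, W i ⊆ U) ∧
      (∀ i, ErgodicComponent (f^[k]) μ (W i)) ∧
      (∀ i j, i ≠ j → μ (W i ∩ W j) = 0) ∧
      μ (U \ ⋃ i, W i) = 0) ∧
    ∀ U₁ U₂ : Set X, U₁ ⊆ U → U₂ ⊆ U →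
      ErgodicComponent (f^[k]) μ U₁ → ErgodicComponent (f^[k]) μ U₂ →
      ∃ j < k, μ ((U₂ \ f^[j] ⁻¹' U₁) ∪ (f^[j] ⁻¹' U₁ \ U₂)) = 0 := by
  refine ⟨?_, fun U₁ U₂ hU₁ hU₂ hE₁ hE₂ => ?_⟩
  · obtain ⟨n, W, hW, hn, hmax⟩ := hU.exists_maximal_isDisjointInvariantFamily hk
    refine ⟨n, W, hn, hW.card_le hU hk, hW.subset, hW.ergodicComponent hmax,
      fun i j hij => ?_, hW.measure_diff_iUnion_eq_zero (preimage_iterate_eq_self hU.1 k) hmax⟩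
    rw [(hW.pairwise_disjoint hij).inter_eq, measure_empty]
  · obtain ⟨j, hj, hpos⟩ :=
      hU.exists_lt_pos_inter_preimage hk hU₁ hE₁.1 hE₁.2.1 hU₂ hE₂.2.1
    have hE₁j : ErgodicComponent (f^[k]) μ (f^[j] ⁻¹' U₁) :=
      hE₁.preimage_iterate hns hk j (hpos.trans_le (measure_mono inter_subset_right))
    exact ⟨j, hj, hE₂.measure_symmDiff_eq_zero hE₁j hpos⟩

/-- **Relating ergodic components of `f` and `f^k`.** If `μ` is `f`-non-singular
and `U` is a `μ`-ergodic component with respect to `f`, then `U` can be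
partitioned (mod `μ`) into at most `k` `μ`-ergodic components with respect to
`f^[k]`; moreover, any two ergodic components `U₁, U₂ ⊆ U` with respect to
`f^[k]` satisfy `U₂ = f^{-j}(U₁)` (mod `μ`) for some `0 ≤ j < k`. -/
theorem ergodic_components_of_iterate
    {X : Type*} [MetricSpace X] [CompactSpace X] [TopologicalSpace.SeparableSpace X]
    [MeasurableSpace X] [BorelSpace X]
    (f : X → X) (hf : Measurable f) (μ : Measure X) [IsFiniteMeasure μ]
    (hns : NonSingular f μ)
    (k : ℕ) (hk : 1 ≤ k)
    (U : Set X) (hU : ErgodicComponent f μ U) :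
    (∃ (m : ℕ) (W : Fin m → Set X), 1 ≤ m ∧ m ≤ k ∧
      (∀ i, W i ⊆ U) ∧
      (∀ i, ErgodicComponent (f^[k]) μ (W i)) ∧
      (∀ i j, i ≠ j → μ (W i ∩ W j) = 0) ∧
      μ (U \ ⋃ i, W i) = 0) ∧
    ∀ U₁ U₂ : Set X, U₁ ⊆ U → U₂ ⊆ U →
      ErgodicComponent (f^[k]) μ U₁ → ErgodicComponent (f^[k]) μ U₂ →
      ∃ j < k, μ ((U₂ \ f^[j] ⁻¹' U₁) ∪ (f^[j] ⁻¹' U₁ \ U₂)) = 0 :=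
  ergodic_components_of_iterate_general f μ hns k hk U hU
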